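/- For every positive integer n and every real q, Σ_{π ∈ 𝒫_2(n,n)} q^{rc(π)} = [n]_q!, where the sum is over all pair partitions of {1,…,2n} in which no block is contained in {1,…,n} or in {n+1,…,2n}, rc(π) is the number of restricted crossings of π, and [n]_q! = [1]_q·[2]_q⋯[n]_q with [m]_q = 1 + q + ⋯ + q^{m−1}. -/

import Mathlib

open Finset MeasureTheory ProbabilityTheory
open scoped Classical

noncomputable section

/-- Index of the interval block (w.r.t. the list of block sizes `ns`)
containing position `i`. -/
def blockIdx (ns : List ℕ) (i : ℕ) : ℕ :=
  (List.range ns.length).countP (fun j => (ns.take (j + 1)).sum ≤ i)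

/-- `P` is a set partition of `Fin n`. -/
def IsPartition {n : ℕ} (P : Finset (Finset (Fin n))) : Prop :=
  (∀ B ∈ P, B.Nonempty) ∧ (∀ i : Fin n, ∃ B ∈ P, i ∈ B) ∧
    ∀ B ∈ P, ∀ C ∈ P, ∀ i : Fin n, i ∈ B → i ∈ C → B = C

/-- `P` is inhomogeneous w.r.t. the interval partition with block sizes `ns`:
no block of `P` contains two distinct elements lying in the same interval block. -/
def Inhom {n : ℕ} (ns : List ℕ) (P : Finset (Finset (Fin n))) : Prop :=
  ∀ B ∈ P, ∀ i ∈ B, ∀ j ∈ B, i ≠ j → blockIdx ns (i : ℕ) ≠ blockIdx ns (j : ℕ)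

/-- `i` and `j` lie in the same block of `P`. -/
def SameBlock {n : ℕ} (P : Finset (Finset (Fin n))) (i j : Fin n) : Prop :=
  ∃ B ∈ P, i ∈ B ∧ j ∈ B

/-- `s(π)`: the number of singleton blocks. -/
def scount {n : ℕ} (P : Finset (Finset (Fin n))) : ℕ :=
  (P.filter fun B => B.card = 1).card

/-- `s₂(π)`: the number of two-element blocks. -/
def s2count {n : ℕ} (P : Finset (Finset (Fin n))) : ℕ :=
  (P.filter fun B => B.card = 2).card

/-- `P` is a noncrossing partition: there are no `i < j < k < l` with `i,k` in one
block and `j,l` in a different block. -/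
def Noncrossing {n : ℕ} (P : Finset (Finset (Fin n))) : Prop :=
  ¬ ∃ i j k l : Fin n, i < j ∧ j < k ∧ k < l ∧
      SameBlock P i k ∧ SameBlock P j l ∧ ¬ SameBlock P i j

/-- A block `B` is inner if some other block contains elements `a`, `b` with
`a < min B` and `max B < b`. -/
def IsInner {n : ℕ} (P : Finset (Finset (Fin n))) (B : Finset (Fin n)) : Prop :=
  ∃ C ∈ P, C ≠ B ∧ ∃ a ∈ C, ∃ b ∈ C, ∀ x ∈ B, a < x ∧ x < b

/-- `i(π)`: the number of inner blocks. -/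
def innerCount {n : ℕ} (P : Finset (Finset (Fin n))) : ℕ :=
  (P.filter fun B => IsInner P B).card

/-- `o(π)`: the number of outer blocks. -/
def outerCount {n : ℕ} (P : Finset (Finset (Fin n))) : ℕ :=
  (P.filter fun B => ¬ IsInner P B).card

/-- `si(π)`: the number of inner singleton blocks. -/
def siCount {n : ℕ} (P : Finset (Finset (Fin n))) : ℕ :=
  (P.filter fun B => B.card = 1 ∧ IsInner P B).card

/-- `rc(π)`: the number of restricted crossings, i.e. of quadruples
`i < j < k < l` with `i ~ k`, `j ~ l`, `k = min {r > i : r ~ i}` and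
`l = min {r > j : r ~ j}`. -/
def rc {n : ℕ} (P : Finset (Finset (Fin n))) : ℕ :=
  ((univ : Finset (Fin n × Fin n × Fin n × Fin n)).filter fun q =>
      q.1 < q.2.1 ∧ q.2.1 < q.2.2.1 ∧ q.2.2.1 < q.2.2.2 ∧
      SameBlock P q.1 q.2.2.1 ∧ SameBlock P q.2.1 q.2.2.2 ∧
      (∀ r : Fin n, q.1 < r → SameBlock P q.1 r → q.2.2.1 ≤ r) ∧
      (∀ r : Fin n, q.2.1 < r → SameBlock P q.2.1 r → q.2.2.2 ≤ r)).card

/-- The depth `d(i)`: the number of blocks containing `a`, `b` with `a < i < b`. -/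
def depth {n : ℕ} (P : Finset (Finset (Fin n))) (i : Fin n) : ℕ :=
  (P.filter fun B => ∃ a ∈ B, ∃ b ∈ B, a < i ∧ i < b).card

/-- `sd(π)`: the sum of the depths of the singleton elements of `P`. -/
def sd {n : ℕ} (P : Finset (Finset (Fin n))) : ℕ :=
  ∑ i ∈ (univ : Finset (Fin n)).filter (fun i => {i} ∈ P), depth P i

/-- The `q`-integer `[m]_q = 1 + q + ⋯ + q^(m-1)`. -/
def qInt (q : ℝ) (m : ℕ) : ℝ := ∑ j ∈ Finset.range m, q ^ j

/-- The `q`-factorial `[m]_q! = [1]_q [2]_q ⋯ [m]_q`. -/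
def qFact (q : ℝ) (m : ℕ) : ℝ := ∏ j ∈ Finset.range m, qInt q (j + 1)

/-- The Hermite polynomials `H_m(x,t)`:
`x H_m = H_{m+1} + m t H_{m-1}`. -/
def hermiteP (x t : ℝ) : ℕ → ℝ
  | 0 => 1
  | 1 => x
  | m + 2 => x * hermiteP x t (m + 1) - ((m : ℝ) + 1) * t * hermiteP x t m

/-- The centered Charlier polynomials `C_m(x,t)`:
`x C_m = C_{m+1} + m C_m + t m C_{m-1}`. -/
def charlierP (x t : ℝ) : ℕ → ℝ
  | 0 => 1
  | 1 => x
  | m + 2 => (x - ((m : ℝ) + 1)) * charlierP x t (m + 1)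
      - t * ((m : ℝ) + 1) * charlierP x t m

/-- The (scaled) Chebyshev polynomials of the second kind `U_m(x,t)`:
`x U_m = U_{m+1} + t U_{m-1}`. -/
def chebyshevU (x t : ℝ) : ℕ → ℝ
  | 0 => 1
  | 1 => x
  | m + 2 => x * chebyshevU x t (m + 1) - t * chebyshevU x t m

/-- The centered free Charlier polynomials `C_{0,m}(x,t)`:
`x C_{0,m} = C_{0,m+1} + C_{0,m} + t C_{0,m-1}` for `m ≥ 1`, `C_{0,1} = x`. -/
def freeCharlier (x t : ℝ) : ℕ → ℝ
  | 0 => 1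
  | 1 => x
  | m + 2 => (x - 1) * freeCharlier x t (m + 1) - t * freeCharlier x t m

/-- The (scaled) continuous q-Hermite polynomials `H_{q,m}(x,t)`:
`x H_{q,m} = H_{q,m+1} + t [m]_q H_{q,m-1}`. -/
def qHermite (q x t : ℝ) : ℕ → ℝ
  | 0 => 1
  | 1 => x
  | m + 2 => x * qHermite q x t (m + 1) - t * qInt q (m + 1) * qHermite q x t m

/-- The (scaled) centered continuous big q-Hermite polynomials `C_{q,m}(x,t)`:
`x C_{q,m} = C_{q,m+1} + [m]_q C_{q,m} + t [m]_q C_{q,m-1}`. -/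
def bigQHermite (q x t : ℝ) : ℕ → ℝ
  | 0 => 1
  | 1 => x
  | m + 2 => (x - qInt q (m + 1)) * bigQHermite q x t (m + 1)
      - t * qInt q (m + 1) * bigQHermite q x t m

/-- The polynomials `P_{q,m,α}(x,t)`:
`x P_{q,m,α} = P_{q,m+1,α} + α [m]_q P_{q,m,α} + t [m]_q P_{q,m-1,α}`. -/
def qPPoly (q α x t : ℝ) : ℕ → ℝ
  | 0 => 1
  | 1 => x
  | m + 2 => (x - α * qInt q (m + 1)) * qPPoly q α x t (m + 1)
      - t * qInt q (m + 1) * qPPoly q α x t m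

namespace Aux18

/-! ### Part A: sum of `q^coinv` over permutations equals the q-factorial -/

/-- Number of co-inversions (non-inversions) of a permutation. -/
def coinv {n : ℕ} (σ : Equiv.Perm (Fin n)) : ℕ :=
  ((univ : Finset (Fin n × Fin n)).filter
    fun p => p.1 < p.2 ∧ σ p.1 < σ p.2).card

/-- Insert a permutation of `Fin n` into `Fin (n+1)` with the last position
mapped to `p`. -/
def insPerm {n : ℕ} (p : Fin (n + 1)) (σ : Equiv.Perm (Fin n)) :
    Equiv.Perm (Fin (n + 1)) :=
  finSuccEquivLast.trans ((Equiv.optionCongr σ).trans (finSuccEquiv' p).symm)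

lemma insPerm_castSucc {n : ℕ} (p : Fin (n + 1)) (σ : Equiv.Perm (Fin n))
    (i : Fin n) : insPerm p σ (Fin.castSucc i) = p.succAbove (σ i) := by
  simp [insPerm, finSuccEquivLast_castSucc, finSuccEquiv'_symm_some]

lemma insPerm_last {n : ℕ} (p : Fin (n + 1)) (σ : Equiv.Perm (Fin n)) :
    insPerm p σ (Fin.last n) = p := by
  simp [insPerm, finSuccEquivLast_last, finSuccEquiv'_symm_none]

lemma insPerm_bijective {n : ℕ} :
    Function.Bijective
      (fun pσ : Fin (n + 1) × Equiv.Perm (Fin n) => insPerm pσ.1 pσ.2) := by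
  rw [Fintype.bijective_iff_injective_and_card]
  constructor
  · rintro ⟨p, σ⟩ ⟨p', σ'⟩ h
    simp only at h
    have hp : p = p' := by
      have := congrArg (fun τ : Equiv.Perm (Fin (n + 1)) => τ (Fin.last n)) h
      simpa [insPerm_last] using this
    subst hp
    have hσ : σ = σ' := by
      apply Equiv.ext
      intro i
      have := congrArg (fun τ : Equiv.Perm (Fin (n + 1)) => τ (Fin.castSucc i)) h
      simp only [insPerm_castSucc] at this
      exact Fin.succAbove_right_injective this
    rw [hσ]
  · simp [Fintype.card_perm, Nat.factorial_succ]

lemma card_filter_fin_lt {n : ℕ} (p : Fin (n + 1)) :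
    ((univ : Finset (Fin n)).filter fun v => Fin.castSucc v < p).card = (p : ℕ) := by
  have hcard : ((univ : Finset (Fin n)).filter fun v => Fin.castSucc v < p).card
      = (Finset.range (p : ℕ)).card := by
    refine Finset.card_bij' (fun v _ => (v : ℕ))
      (fun m hm => (⟨m, by
        have : m < (p : ℕ) := Finset.mem_range.mp hm
        omega⟩ : Fin n)) ?_ ?_ ?_ ?_
    · intro a ha
      simp only [mem_filter, mem_univ, true_and] at ha
      simp only [Finset.mem_range]
      simpa [Fin.lt_def] using ha
    · intro m hm
      have : m < (p : ℕ) := Finset.mem_range.mp hm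
      simp [Fin.lt_def, this]
    · intro a _; rfl
    · intro m _; rfl
  simpa using hcard

lemma coinv_insPerm {n : ℕ} (p : Fin (n + 1)) (σ : Equiv.Perm (Fin n)) :
    coinv (insPerm p σ) = coinv σ + (p : ℕ) := by
  classical
  set τ := insPerm p σ with hτ
  set T₁ := ((univ : Finset (Fin n × Fin n)).filter
    fun pr => pr.1 < pr.2 ∧ σ pr.1 < σ pr.2) with hT₁
  set T₂ := ((univ : Finset (Fin n)).filter fun k => Fin.castSucc (σ k) < p) with hT₂
  have key : ((univ : Finset (Fin (n + 1) × Fin (n + 1))).filter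
      fun pr => pr.1 < pr.2 ∧ τ pr.1 < τ pr.2).card = (T₁.disjSum T₂).card := by
    symm
    apply Finset.card_bij
      (i := fun x _ => Sum.elim
        (fun pr : Fin n × Fin n => (Fin.castSucc pr.1, Fin.castSucc pr.2))
        (fun k : Fin n => (Fin.castSucc k, Fin.last n)) x)
    · rintro (⟨i, j⟩ | k) hx
      · simp only [hT₁, Finset.inl_mem_disjSum, mem_filter, mem_univ, true_and] at hx
        simp only [Sum.elim_inl, mem_filter, mem_univ, true_and]
        refine ⟨by simpa using hx.1, ?_⟩
        simp only [hτ, insPerm_castSucc]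
        exact (Fin.succAbove_lt_succAbove_iff).mpr hx.2
      · simp only [hT₂, Finset.inr_mem_disjSum, mem_filter, mem_univ, true_and] at hx
        simp only [Sum.elim_inr, mem_filter, mem_univ, true_and]
        refine ⟨Fin.castSucc_lt_last k, ?_⟩
        simp only [hτ, insPerm_castSucc, insPerm_last]
        exact (Fin.succAbove_lt_iff_castSucc_lt p (σ k)).mpr hx
    · rintro (⟨i, j⟩ | k) _ (⟨i', j'⟩ | k') _ h
      · simp only [Sum.elim_inl, Prod.mk.injEq] at h
        have h1 : i = i' := Fin.castSucc_injective n h.1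
        have h2 : j = j' := Fin.castSucc_injective n h.2
        simp [h1, h2]
      · simp only [Sum.elim_inl, Sum.elim_inr, Prod.mk.injEq] at h
        exact absurd h.2 (Fin.castSucc_lt_last j).ne
      · simp only [Sum.elim_inl, Sum.elim_inr, Prod.mk.injEq] at h
        exact absurd h.2.symm (Fin.castSucc_lt_last j').ne
      · simp only [Sum.elim_inr, Prod.mk.injEq] at h
        have : k = k' := Fin.castSucc_injective n h.1
        simp [this]
    · rintro ⟨a, b⟩ hab
      simp only [mem_filter, mem_univ, true_and] at hab
      obtain ⟨hab1, hab2⟩ := hab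
      have ha : a ≠ Fin.last n := Fin.ne_last_of_lt hab1
      obtain ⟨i, rfl⟩ := Fin.exists_castSucc_eq.mpr ha
      rcases Fin.eq_castSucc_or_eq_last b with ⟨j, rfl⟩ | rfl
      · refine ⟨Sum.inl (i, j), ?_, rfl⟩
        simp only [hT₁, Finset.inl_mem_disjSum, mem_filter, mem_univ, true_and]
        refine ⟨by simpa using hab1, ?_⟩
        rw [hτ, insPerm_castSucc, insPerm_castSucc] at hab2
        exact (Fin.succAbove_lt_succAbove_iff).mp hab2
      · refine ⟨Sum.inr i, ?_, rfl⟩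
        simp only [hT₂, Finset.inr_mem_disjSum, mem_filter, mem_univ, true_and]
        rw [hτ, insPerm_castSucc, insPerm_last] at hab2
        exact (Fin.succAbove_lt_iff_castSucc_lt p (σ i)).mp hab2
  have hT₂card : T₂.card = (p : ℕ) := by
    have : T₂.card = ((univ : Finset (Fin n)).filter fun v => Fin.castSucc v < p).card := by
      apply Finset.card_bij (fun k _ => σ k)
      · intro k hk
        simp only [hT₂, mem_filter, mem_univ, true_and] at hk ⊢
        exact hk
      · intro k _ k' _ h; exact σ.injective h
      · intro v hv
        refine ⟨σ.symm v, ?_, by simp⟩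
        simp only [hT₂, mem_filter, mem_univ, true_and] at hv ⊢
        simpa using hv
    rw [this, card_filter_fin_lt]
  rw [coinv, key, Finset.card_disjSum, hT₂card, hT₁]
  rfl

lemma sum_q_coinv (q : ℝ) : ∀ n : ℕ,
    (∑ σ : Equiv.Perm (Fin n), q ^ coinv σ) = qFact q n := by
  intro n
  induction n with
  | zero =>
    have h0 : ∀ σ : Equiv.Perm (Fin 0), coinv σ = 0 := by
      intro σ
      simp [coinv, Finset.univ_eq_empty]
    rw [qFact]
    simp only [h0, pow_zero, Finset.sum_const, Finset.card_univ, smul_eq_mul, mul_one,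
      Finset.range_zero, Finset.prod_empty]
    rw [Fintype.card_perm]
    simp
  | succ n ih =>
    have hb := Fintype.sum_bijective _ (insPerm_bijective (n := n))
      (fun pσ : Fin (n + 1) × Equiv.Perm (Fin n) => q ^ coinv (insPerm pσ.1 pσ.2))
      (fun τ => q ^ coinv τ) (fun pσ => rfl)
    rw [← hb]
    have : ∀ pσ : Fin (n + 1) × Equiv.Perm (Fin n),
        q ^ coinv (insPerm pσ.1 pσ.2) = q ^ (pσ.1 : ℕ) * q ^ coinv pσ.2 := by
      rintro ⟨p, σ⟩
      rw [coinv_insPerm, pow_add, mul_comm]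
    rw [Fintype.sum_congr _ _ this, Fintype.sum_prod_type,
      ← Finset.sum_mul_sum univ univ (fun p : Fin (n + 1) => q ^ (p : ℕ))
        (fun σ : Equiv.Perm (Fin n) => q ^ coinv σ)]
    rw [ih, Fin.sum_univ_eq_sum_range (fun j => q ^ j) (n + 1)]
    simp only [qFact, qInt, Finset.prod_range_succ]
    ring

/-! ### Part B: the pair-partition side -/

variable {n : ℕ}

/-- Left element. -/
def Le (n : ℕ) (i : Fin n) : Fin (n + n) := ⟨(i : ℕ), by omega⟩

/-- Right element. -/
def Ri (n : ℕ) (i : Fin n) : Fin (n + n) := ⟨n + (i : ℕ), by omega⟩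

lemma Le_lt_iff {i j : Fin n} : Le n i < Le n j ↔ i < j := Iff.rfl

lemma Ri_lt_iff {i j : Fin n} : Ri n i < Ri n j ↔ i < j := by
  rw [Fin.lt_def, Fin.lt_def]
  simp only [Ri]
  omega

lemma Le_lt_Ri (i j : Fin n) : Le n i < Ri n j := by
  simp only [Le, Ri, Fin.lt_def]
  omega

lemma Le_ne_Ri (i j : Fin n) : Le n i ≠ Ri n j := (Le_lt_Ri i j).ne

lemma Le_injective : Function.Injective (Le n) := by
  intro i j h
  exact Fin.ext (by simpa [Le, Fin.ext_iff] using h)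

lemma Ri_injective : Function.Injective (Ri n) := by
  intro i j h
  simp only [Ri, Fin.ext_iff] at h
  exact Fin.ext (by omega)

lemma blockIdx_eq {m : ℕ} (hm : m < n + n) :
    blockIdx [n, n] m = if n ≤ m then 1 else 0 := by
  simp only [blockIdx]
  rw [show (List.range ([n, n] : List ℕ).length) = [0, 1] from rfl]
  simp only [List.countP_cons, List.countP_nil, List.take, List.sum_cons, List.sum_nil,
    decide_eq_true_eq]
  by_cases h : n ≤ m
  · have h2 : ¬ (n + (n + 0) ≤ m) := by omega
    simp [h, h2]
    omega
  · have h2 : ¬ (n + (n + 0) ≤ m) := by omega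
    have h1 : ¬ (n + 0 ≤ m) := by omega
    simp [h, h1, h2]
    omega

lemma blockIdx_Le (i : Fin n) : blockIdx [n, n] ((Le n i : Fin (n + n)) : ℕ) = 0 := by
  have hi : (i : ℕ) < n := i.2
  rw [blockIdx_eq (by omega)]
  simp [Le, hi.not_ge]

lemma blockIdx_Ri (i : Fin n) : blockIdx [n, n] ((Ri n i : Fin (n + n)) : ℕ) = 1 := by
  have hi : (i : ℕ) < n := i.2
  rw [blockIdx_eq (by omega)]
  simp [Ri]

/-- Every element of `Fin (n+n)` is a left or a right element. -/
lemma eq_Le_or_Ri (a : Fin (n + n)) : (∃ i, a = Le n i) ∨ ∃ i, a = Ri n i := by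
  by_cases h : (a : ℕ) < n
  · exact Or.inl ⟨⟨a, h⟩, Fin.ext rfl⟩
  · refine Or.inr ⟨⟨(a : ℕ) - n, by omega⟩, Fin.ext ?_⟩
    simp only [Ri]
    omega

/-- The matching associated to a permutation. -/
def Mpart (σ : Equiv.Perm (Fin n)) : Finset (Finset (Fin (n + n))) :=
  Finset.image (fun i => ({Le n i, Ri n (σ i)} : Finset (Fin (n + n)))) univ

lemma mem_Mpart {σ : Equiv.Perm (Fin n)} {B : Finset (Finset (Fin (n + n)))} : True := trivial

lemma sameBlock_Mpart {σ : Equiv.Perm (Fin n)} {a b : Fin (n + n)} :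
    SameBlock (Mpart σ) a b ↔
      ∃ i, (a = Le n i ∨ a = Ri n (σ i)) ∧ (b = Le n i ∨ b = Ri n (σ i)) := by
  constructor
  · rintro ⟨B, hB, haB, hbB⟩
    simp only [Mpart, Finset.mem_image, mem_univ, true_and] at hB
    obtain ⟨i, rfl⟩ := hB
    simp only [Finset.mem_insert, Finset.mem_singleton] at haB hbB
    exact ⟨i, haB, hbB⟩
  · rintro ⟨i, ha, hb⟩
    refine ⟨{Le n i, Ri n (σ i)}, ?_, ?_, ?_⟩
    · simp only [Mpart, Finset.mem_image, mem_univ, true_and]; exact ⟨i, rfl⟩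
    · simp only [Finset.mem_insert, Finset.mem_singleton]; exact ha
    · simp only [Finset.mem_insert, Finset.mem_singleton]; exact hb

lemma Mpart_mem_filter (σ : Equiv.Perm (Fin n)) :
    IsPartition (Mpart σ) ∧ Inhom [n, n] (Mpart σ) ∧ ∀ B ∈ Mpart σ, B.card = 2 := by
  have hcard : ∀ B ∈ Mpart σ, B.card = 2 := by
    intro B hB
    simp only [Mpart, Finset.mem_image, mem_univ, true_and] at hB
    obtain ⟨i, rfl⟩ := hB
    rw [Finset.card_insert_of_notMem (by simp [Le_ne_Ri]), Finset.card_singleton]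
  refine ⟨⟨?_, ?_, ?_⟩, ?_, hcard⟩
  · intro B hB
    simp only [Mpart, Finset.mem_image, mem_univ, true_and] at hB
    obtain ⟨i, rfl⟩ := hB
    exact ⟨Le n i, by simp⟩
  · intro a
    rcases eq_Le_or_Ri a with ⟨i, rfl⟩ | ⟨i, rfl⟩
    · exact ⟨{Le n i, Ri n (σ i)}, by
        simp only [Mpart, Finset.mem_image, mem_univ, true_and]; exact ⟨i, rfl⟩, by simp⟩
    · exact ⟨{Le n (σ.symm i), Ri n (σ (σ.symm i))}, by
        simp only [Mpart, Finset.mem_image, mem_univ, true_and]; exact ⟨σ.symm i, rfl⟩, by simp⟩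
  · intro B hB C hC a haB haC
    simp only [Mpart, Finset.mem_image, mem_univ, true_and] at hB hC
    obtain ⟨i, rfl⟩ := hB
    obtain ⟨j, rfl⟩ := hC
    simp only [Finset.mem_insert, Finset.mem_singleton] at haB haC
    have hij : i = j := by
      rcases haB with rfl | rfl <;> rcases haC with h | h
      · exact Le_injective h
      · exact absurd h (Le_ne_Ri _ _)
      · exact absurd h.symm (Le_ne_Ri _ _)
      · exact σ.injective (Ri_injective h)
    rw [hij]
  · intro B hB a haB b hbB hab
    simp only [Mpart, Finset.mem_image, mem_univ, true_and] at hB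
    obtain ⟨i, rfl⟩ := hB
    simp only [Finset.mem_insert, Finset.mem_singleton] at haB hbB
    rcases haB with rfl | rfl <;> rcases hbB with rfl | rfl
    · exact absurd rfl hab
    · rw [blockIdx_Le, blockIdx_Ri]; omega
    · rw [blockIdx_Le, blockIdx_Ri]; omega
    · exact absurd rfl hab

lemma rc_Mpart (σ : Equiv.Perm (Fin n)) : rc (Mpart σ) = coinv σ := by
  rw [rc, coinv]
  symm
  apply Finset.card_bij (fun pr _ => ((Le n pr.1 : Fin (n + n)), (Le n pr.2, (Ri n (σ pr.1), Ri n (σ pr.2)))))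
  · rintro ⟨i, j⟩ hij
    simp only [mem_filter, mem_univ, true_and] at hij ⊢
    obtain ⟨h1, h2⟩ := hij
    refine ⟨Le_lt_iff.mpr h1, Le_lt_Ri _ _, Ri_lt_iff.mpr h2, ?_, ?_, ?_, ?_⟩
    · exact sameBlock_Mpart.mpr ⟨i, Or.inl rfl, Or.inr rfl⟩
    · exact sameBlock_Mpart.mpr ⟨j, Or.inl rfl, Or.inr rfl⟩
    · intro r hr hsb
      obtain ⟨k, hk1, hk2⟩ := sameBlock_Mpart.mp hsb
      rcases hk1 with h | h
      · have : i = k := Le_injective h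
        subst this
        rcases hk2 with rfl | rfl
        · exact absurd rfl hr.ne'
        · exact le_refl _
      · exact absurd h (Le_ne_Ri _ _)
    · intro r hr hsb
      obtain ⟨k, hk1, hk2⟩ := sameBlock_Mpart.mp hsb
      rcases hk1 with h | h
      · have : j = k := Le_injective h
        subst this
        rcases hk2 with rfl | rfl
        · exact absurd rfl hr.ne'
        · exact le_refl _
      · exact absurd h (Le_ne_Ri _ _)
  · rintro ⟨i, j⟩ _ ⟨i', j'⟩ _ h
    simp only [Prod.mk.injEq] at h
    have h1 : i = i' := Le_injective h.1
    have h2 : j = j' := Le_injective h.2.1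
    simp [h1, h2]
  · rintro ⟨a, b, c, d⟩ h
    simp only [mem_filter, mem_univ, true_and] at h
    obtain ⟨hab, hbc, hcd, hac, hbd, -, -⟩ := h
    obtain ⟨i, hi1, hi2⟩ := sameBlock_Mpart.mp hac
    obtain ⟨j, hj1, hj2⟩ := sameBlock_Mpart.mp hbd
    have hac' : a < c := hab.trans hbc
    have hbd' : b < d := hbc.trans hcd
    -- a must be Le i and c must be Ri (σ i)
    have hai : a = Le n i ∧ c = Ri n (σ i) := by
      rcases hi1 with rfl | rfl
      · rcases hi2 with rfl | rfl
        · exact absurd rfl hac'.ne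
        · exact ⟨rfl, rfl⟩
      · rcases hi2 with rfl | rfl
        · exact absurd (Le_lt_Ri i (σ i)) hac'.asymm
        · exact absurd rfl hac'.ne
    have hbj : b = Le n j ∧ d = Ri n (σ j) := by
      rcases hj1 with rfl | rfl
      · rcases hj2 with rfl | rfl
        · exact absurd rfl hbd'.ne
        · exact ⟨rfl, rfl⟩
      · rcases hj2 with rfl | rfl
        · exact absurd (Le_lt_Ri j (σ j)) hbd'.asymm
        · exact absurd rfl hbd'.ne
    obtain ⟨rfl, rfl⟩ := hai
    obtain ⟨rfl, rfl⟩ := hbj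
    refine ⟨(i, j), ?_, rfl⟩
    simp only [mem_filter, mem_univ, true_and]
    exact ⟨Le_lt_iff.mp hab, Ri_lt_iff.mp hcd⟩

/-- Surjectivity: every admissible partition is `Mpart σ` for some `σ`. -/
lemma exists_perm_of_partition (P : Finset (Finset (Fin (n + n))))
    (hP : IsPartition P) (hI : Inhom [n, n] P) (h2 : ∀ B ∈ P, B.card = 2) :
    ∃ σ : Equiv.Perm (Fin n), P = Mpart σ := by
  classical
  obtain ⟨hne, hcover, huniq⟩ := hP
  -- for each i, there is a unique j with SameBlock P (Le n i) (Ri n j)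
  have hex : ∀ i : Fin n, ∃ j : Fin n, SameBlock P (Le n i) (Ri n j) := by
    intro i
    obtain ⟨B, hB, hiB⟩ := hcover (Le n i)
    have hBcard := h2 B hB
    obtain ⟨x, y, hxy, hBxy⟩ := Finset.card_eq_two.mp hBcard
    have : Le n i = x ∨ Le n i = y := by
      rw [hBxy] at hiB
      simpa using hiB
    -- the other element b
    obtain ⟨b, hbB, hbne⟩ : ∃ b ∈ B, b ≠ Le n i := by
      rcases this with rfl | rfl
      · exact ⟨y, by rw [hBxy]; simp, fun h => hxy h.symm⟩
      · exact ⟨x, by rw [hBxy]; simp, hxy⟩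
    have hbi := hI B hB b hbB (Le n i) hiB hbne
    rw [blockIdx_Le] at hbi
    rcases eq_Le_or_Ri b with ⟨k, rfl⟩ | ⟨k, rfl⟩
    · exact absurd (blockIdx_Le k) hbi
    · exact ⟨k, B, hB, hiB, hbB⟩
  choose f hf using hex
  -- the common block of Le i and Ri (f i) is {Le i, Ri (f i)}
  have hblock : ∀ i : Fin n, ({Le n i, Ri n (f i)} : Finset (Fin (n + n))) ∈ P := by
    intro i
    obtain ⟨B, hB, h1, h2'⟩ := hf i
    have hsub : ({Le n i, Ri n (f i)} : Finset (Fin (n + n))) ⊆ B := by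
      intro x hx
      simp only [Finset.mem_insert, Finset.mem_singleton] at hx
      rcases hx with rfl | rfl
      · exact h1
      · exact h2'
    have hcard2 : ({Le n i, Ri n (f i)} : Finset (Fin (n + n))).card = 2 := by
      rw [Finset.card_insert_of_notMem (by simp [Le_ne_Ri]), Finset.card_singleton]
    have := Finset.eq_of_subset_of_card_le hsub (by rw [hcard2, h2 B hB])
    rwa [← this] at hB
  have hfinj : Function.Injective f := by
    intro i i' hii'
    obtain ⟨B, hB, h1, h2'⟩ := hf i
    obtain ⟨B', hB', h1', h2''⟩ := hf i'
    rw [hii'] at h2'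
    have hBB' : B = B' := huniq B hB B' hB' (Ri n (f i')) h2' h2''
    subst hBB'
    -- B has card 2, contains Le i, Le i', Ri (f i'); Le i ≠ Ri, Le i' ≠ Ri
    by_contra hne'
    have hLe : Le n i ≠ Le n i' := fun h => hne' (Le_injective h)
    have : ({Le n i, Le n i', Ri n (f i')} : Finset (Fin (n + n))) ⊆ B := by
      intro x hx
      simp only [Finset.mem_insert, Finset.mem_singleton] at hx
      rcases hx with rfl | rfl | rfl
      · exact h1
      · exact h1'
      · exact h2'
    have h3 : ({Le n i, Le n i', Ri n (f i')} : Finset (Fin (n + n))).card = 3 := by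
      rw [Finset.card_insert_of_notMem (by simp [hLe, Le_ne_Ri]),
        Finset.card_insert_of_notMem (by simp [Le_ne_Ri]), Finset.card_singleton]
    have := Finset.card_le_card this
    rw [h3, h2 B hB] at this
    omega
  have hfbij : Function.Bijective f := Finite.injective_iff_bijective.mp hfinj
  refine ⟨Equiv.ofBijective f hfbij, ?_⟩
  apply Finset.Subset.antisymm
  · -- P ⊆ Mpart σ
    intro B hB
    have hBcard := h2 B hB
    obtain ⟨x, y, hxy, hBxy⟩ := Finset.card_eq_two.mp hBcard
    -- one of x, y is a left element (Inhom)
    have hIxy := hI B hB x (by rw [hBxy]; simp) y (by rw [hBxy]; simp) hxy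
    obtain ⟨i, b, hBib⟩ : ∃ (i : Fin n) (b : Fin (n + n)),
        B = {Le n i, b} ∧ b ≠ Le n i := by
      rcases eq_Le_or_Ri x with ⟨i, rfl⟩ | ⟨i, rfl⟩
      · exact ⟨i, y, hBxy, fun h => hxy h.symm⟩
      · rcases eq_Le_or_Ri y with ⟨j, rfl⟩ | ⟨j, rfl⟩
        · exact ⟨j, Ri n i, by rw [hBxy]; exact Finset.pair_comm _ _, (Le_ne_Ri j i).symm⟩
        · exact absurd (by rw [blockIdx_Ri, blockIdx_Ri] : blockIdx [n, n] ((Ri n i : Fin (n+n)) : ℕ) = blockIdx [n, n] ((Ri n j : Fin (n+n)) : ℕ)) hIxy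
    obtain ⟨hBi, hbne⟩ := hBib
    -- b is a right element
    have hbi := hI B hB b (by rw [hBi]; simp) (Le n i) (by rw [hBi]; simp) hbne
    rw [blockIdx_Le] at hbi
    obtain ⟨k, rfl⟩ : ∃ k, b = Ri n k := by
      rcases eq_Le_or_Ri b with ⟨k, rfl⟩ | hk
      · exact absurd (blockIdx_Le k) hbi
      · exact hk
    -- k = f i by uniqueness of blocks
    have hBfi := hblock i
    have hsame : B = {Le n i, Ri n (f i)} :=
      huniq B hB _ hBfi (Le n i) (by rw [hBi]; simp) (by simp)
    rw [hBi] at hsame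
    have hk : Ri n k = Ri n (f i) := by
      have : Ri n k ∈ ({Le n i, Ri n (f i)} : Finset (Fin (n + n))) := by
        rw [← hsame]; simp
      simp only [Finset.mem_insert, Finset.mem_singleton] at this
      rcases this with h | h
      · exact absurd h.symm (Le_ne_Ri _ _)
      · exact h
    rw [hBi, hk]
    simp only [Mpart, Finset.mem_image, mem_univ, true_and]
    exact ⟨i, rfl⟩
  · -- Mpart σ ⊆ P
    intro B hB
    simp only [Mpart, Finset.mem_image, mem_univ, true_and] at hB
    obtain ⟨i, rfl⟩ := hB
    exact hblock i

lemma Mpart_injective : Function.Injective (Mpart (n := n)) := by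
  intro σ σ' h
  apply Equiv.ext
  intro i
  have h1 : ({Le n i, Ri n (σ i)} : Finset (Fin (n + n))) ∈ Mpart σ' := by
    rw [← h]
    simp only [Mpart, Finset.mem_image, mem_univ, true_and]
    exact ⟨i, rfl⟩
  simp only [Mpart, Finset.mem_image, mem_univ, true_and] at h1
  obtain ⟨j, hj⟩ := h1
  have hLe : Le n i ∈ ({Le n j, Ri n (σ' j)} : Finset (Fin (n + n))) := by
    rw [hj]; simp
  simp only [Finset.mem_insert, Finset.mem_singleton] at hLe
  have hij : i = j := by
    rcases hLe with h' | h'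
    · exact Le_injective h'
    · exact absurd h' (Le_ne_Ri _ _)
  subst hij
  have hRi : Ri n (σ i) ∈ ({Le n i, Ri n (σ' i)} : Finset (Fin (n + n))) := by
    rw [hj]; simp
  simp only [Finset.mem_insert, Finset.mem_singleton] at hRi
  rcases hRi with h' | h'
  · exact absurd h'.symm (Le_ne_Ri _ _)
  · exact Ri_injective h'

lemma sum_partitions (q : ℝ) :
    (∑ P ∈ (univ : Finset (Finset (Finset (Fin (n + n))))).filter
        (fun P => IsPartition P ∧ Inhom [n, n] P ∧ ∀ B ∈ P, B.card = 2),
      q ^ rc P) = qFact q n := by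
  classical
  rw [← sum_q_coinv q n]
  symm
  apply Finset.sum_bij (fun σ _ => Mpart σ)
  · intro σ _
    simp only [mem_filter, mem_univ, true_and]
    exact Mpart_mem_filter σ
  · intro σ _ σ' _ h
    exact Mpart_injective h
  · intro P hP
    simp only [mem_filter, mem_univ, true_and] at hP
    obtain ⟨σ, rfl⟩ := exists_perm_of_partition P hP.1 hP.2.1 hP.2.2
    exact ⟨σ, mem_univ σ, rfl⟩
  · intro σ _
    rw [rc_Mpart]

end Aux18

/-- The restricted-crossing generating function of inhomogeneous pair
partitions in `𝒫₂(n,n)` is the q-factorial `[n]_q!`. -/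
theorem statement18 (n : ℕ) (hn : 0 < n) (q : ℝ) :
    (∑ P ∈ (univ : Finset (Finset (Finset (Fin [n, n].sum)))).filter
        (fun P => IsPartition P ∧ Inhom [n, n] P ∧ ∀ B ∈ P, B.card = 2),
      q ^ rc P) = qFact q n := by
  have hsum : ([n, n] : List ℕ).sum = n + n := by simp
  rw [show ([n, n] : List ℕ).sum = n + n from hsum]
  exact Aux18.sum_partitions q
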